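/- With E₀ the Gallager source function of a joint distribution p_{XY} on finite alphabets, the ratio E₀(ρ)/ρ is nondecreasing on (0,∞); its derivative equals D(p̄^ρ_{XY}‖p_{XY})/ρ², which is strictly positive unless p_{X|Y} is conditionally uniform on its support. -/

import Mathlib

/-!
Write `S_y(ρ) = ∑ₓ p(x,y)^{1/(1+ρ)}` and `F(ρ) = ∑_y S_y(ρ)^{1+ρ}`, so that `E₀ = log₂ F` and
`p̄^ρ(x,y) = S_y^ρ p(x,y)^{1/(1+ρ)} / F`. With the score `s(x,y) = log S_y - log p(x,y) / (1+ρ)`,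
differentiation gives `(ln F)' = 𝔼_{p̄^ρ}[s]`, while `ln (p̄^ρ / p) = ρ s - ln F` on the support
of `p`. Hence `ρ E₀' - E₀ = D(p̄^ρ ‖ p)`, which is the numerator of `(E₀/ρ)'`. Gibbs' inequality
makes it nonnegative, and it vanishes only if `p̄^ρ = p`. In that case
`p(x,y)^{ρ/(1+ρ)} F = S_y^ρ` on the support, so each row `p(·,y)` is constant on its support,
whose size `M_y` then satisfies `M_y^ρ = F`: the support sizes agree and `p_{X|Y}` is uniform.
-/

/-- The `X–Y` tilted distribution `p̄^ρ_{XY}` of a joint pmf `p` on `𝒳 × 𝒴`. -/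
noncomputable def tilt {𝒳 𝒴 : Type*} [Fintype 𝒳] [Fintype 𝒴]
    (p : 𝒳 × 𝒴 → ℝ) (ρ : ℝ) (z : 𝒳 × 𝒴) : ℝ :=
  ((∑ s, p (s, z.2) ^ ((1 : ℝ) / (1 + ρ))) ^ (1 + ρ)
      / ∑ t, (∑ s, p (s, t) ^ ((1 : ℝ) / (1 + ρ))) ^ (1 + ρ))
    * (p z ^ ((1 : ℝ) / (1 + ρ)) / ∑ s, p (s, z.2) ^ ((1 : ℝ) / (1 + ρ)))

/-- KL divergence (in bits) between pmfs on a finite set. -/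
noncomputable def klDiv {α : Type*} [Fintype α] (q p : α → ℝ) : ℝ :=
  ∑ a, q a * Real.logb 2 (q a / p a)

/-- Gallager source function `E₀(ρ)` for a joint source with side-information. -/
noncomputable def gallagerE0 {𝒳 𝒴 : Type*} [Fintype 𝒳] [Fintype 𝒴]
    (p : 𝒳 × 𝒴 → ℝ) (ρ : ℝ) : ℝ :=
  Real.logb 2 (∑ y, (∑ x, p (x, y) ^ ((1 : ℝ) / (1 + ρ))) ^ (1 + ρ))

/-- `p_{X|Y}` is conditionally uniform on its support with a common support size `M`. -/
def CondUniform {𝒳 𝒴 : Type*} [Fintype 𝒳] [Fintype 𝒴] (p : 𝒳 × 𝒴 → ℝ) : Prop :=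
  ∃ M : ℕ, ∀ z : 𝒳 × 𝒴, p z ≠ 0 → p z / (∑ x, p (x, z.2)) = 1 / (M : ℝ)

open Real Finset
open InformationTheory (klFun klFun_apply klFun_nonneg klFun_eq_zero_iff)

lemma sum_comp_eq_card_support_mul {ι : Type*} [Fintype ι] {f : ι → ℝ} {c : ℝ}
    (hf : ∀ i, f i ≠ 0 → f i = c) {g : ℝ → ℝ} (hg : g 0 = 0) :
    ∑ i, g (f i) = #{i | f i ≠ 0} * g c := by
  rw [← sum_filter_of_ne (p := fun i => f i ≠ 0) fun i _ hi h0 => hi (by rw [h0, hg]),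
    sum_congr rfl fun i hi => by rw [hf i (mem_filter.1 hi).2], sum_const, nsmul_eq_mul]

lemma hasDerivAt_rpow_one_div_one_add {c ρ : ℝ} (hc : 0 ≤ c) (hρ : 0 < 1 + ρ) :
    HasDerivAt (fun t => c ^ ((1 : ℝ) / (1 + t)))
      (-(c ^ ((1 : ℝ) / (1 + ρ)) * log c / (1 + ρ) ^ 2)) ρ := by
  rcases hc.eq_or_lt with rfl | hc
  · have hzero : (fun t : ℝ => (0 : ℝ) ^ ((1 : ℝ) / (1 + t))) =ᶠ[nhds ρ] fun _ => 0 := by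
      filter_upwards [eventually_gt_nhds (show -1 < ρ by linarith)] with t ht
      exact zero_rpow (one_div_pos.2 (by linarith)).ne'
    simpa using (hasDerivAt_const ρ (0 : ℝ)).congr_of_eventuallyEq hzero
  · have hexp : HasDerivAt (fun t : ℝ => (1 : ℝ) / (1 + t)) (-(1 / (1 + ρ) ^ 2)) ρ := by
      simpa [one_div, neg_div] using ((hasDerivAt_id ρ).const_add 1).fun_inv hρ.ne'
    convert hexp.const_rpow hc using 1
    ring

section KullbackLeibler

variable {α : Type*} [Fintype α] {q p : α → ℝ}

lemma klDiv_mul_log_two (q p : α → ℝ) : klDiv q p * log 2 = ∑ a, q a * log (q a / p a) := by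
  rw [klDiv, sum_mul]
  refine sum_congr rfl fun a _ => ?_
  rw [logb, mul_assoc, div_mul_cancel₀ _ (log_pos one_lt_two).ne']

lemma klDiv_mul_log_two_eq_sum_klFun (hac : ∀ a, p a = 0 → q a = 0) (hq : ∑ a, q a = 1)
    (hp : ∑ a, p a = 1) : klDiv q p * log 2 = ∑ a, p a * klFun (q a / p a) := by
  have hterm (a : α) : p a * klFun (q a / p a) = q a * log (q a / p a) + p a - q a := by
    by_cases ha : p a = 0
    · simp [ha, hac a ha]
    · rw [klFun_apply]
      field_simp
  rw [klDiv_mul_log_two, sum_congr rfl fun a _ => hterm a, sum_sub_distrib, sum_add_distrib, hq,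
    hp, add_sub_cancel_right]

lemma klDiv_nonneg (hq0 : ∀ a, 0 ≤ q a) (hp0 : ∀ a, 0 ≤ p a) (hac : ∀ a, p a = 0 → q a = 0)
    (hq : ∑ a, q a = 1) (hp : ∑ a, p a = 1) : 0 ≤ klDiv q p := by
  have hsum : 0 ≤ klDiv q p * log 2 := by
    rw [klDiv_mul_log_two_eq_sum_klFun hac hq hp]
    exact sum_nonneg fun a _ =>
      mul_nonneg (hp0 a) (klFun_nonneg (div_nonneg (hq0 a) (hp0 a)))
  exact nonneg_of_mul_nonneg_left hsum (log_pos one_lt_two)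

lemma klDiv_pos (hq0 : ∀ a, 0 ≤ q a) (hp0 : ∀ a, 0 ≤ p a) (hac : ∀ a, p a = 0 → q a = 0)
    (hq : ∑ a, q a = 1) (hp : ∑ a, p a = 1) (hne : q ≠ p) : 0 < klDiv q p := by
  obtain ⟨a, ha⟩ := Function.ne_iff.1 hne
  have hpa : 0 < p a := (hp0 a).lt_of_ne' fun h => ha (by rw [h, hac a h])
  have hkl : 0 < klFun (q a / p a) :=
    (klFun_nonneg (div_nonneg (hq0 a) hpa.le)).lt_of_ne' fun h =>
      ha ((div_eq_one_iff_eq hpa.ne').1 ((klFun_eq_zero_iff (div_nonneg (hq0 a) hpa.le)).1 h))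
  have hsum : 0 < klDiv q p * log 2 := by
    rw [klDiv_mul_log_two_eq_sum_klFun hac hq hp]
    exact sum_pos' (fun b _ => mul_nonneg (hp0 b) (klFun_nonneg (div_nonneg (hq0 b) (hp0 b))))
      ⟨a, mem_univ a, mul_pos hpa hkl⟩
  exact pos_of_mul_pos_left hsum (log_pos one_lt_two).le

end KullbackLeibler

namespace GallagerE0

variable {𝒳 𝒴 : Type*} [Fintype 𝒳] {p : 𝒳 × 𝒴 → ℝ} {ρ : ℝ}

noncomputable def rowSum (p : 𝒳 × 𝒴 → ℝ) (t : ℝ) (y : 𝒴) : ℝ :=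
  ∑ x, p (x, y) ^ ((1 : ℝ) / (1 + t))

lemma rowSum_pos (hp : ∀ z, 0 ≤ p z) (hY : ∀ y, 0 < ∑ x, p (x, y)) (t : ℝ) (y : 𝒴) :
    0 < rowSum p t y := by
  obtain ⟨x, -, hx⟩ := exists_lt_of_sum_lt (by simpa using hY y : ∑ _ : 𝒳, (0 : ℝ) < _)
  exact sum_pos' (fun x _ => rpow_nonneg (hp _) _) ⟨x, mem_univ x, rpow_pos_of_pos hx _⟩

noncomputable def tiltScore (p : 𝒳 × 𝒴 → ℝ) (ρ : ℝ) (z : 𝒳 × 𝒴) : ℝ :=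
  log (rowSum p ρ z.2) - log (p z) / (1 + ρ)

lemma hasDerivAt_rowSum_rpow (hp : ∀ z, 0 ≤ p z) (hY : ∀ y, 0 < ∑ x, p (x, y))
    (hρ : 0 < 1 + ρ) (y : 𝒴) :
    HasDerivAt (fun t => rowSum p t y ^ (1 + t))
      (∑ x, rowSum p ρ y ^ ρ * p (x, y) ^ ((1 : ℝ) / (1 + ρ)) * tiltScore p ρ (x, y)) ρ := by
  have hS := rowSum_pos hp hY ρ y
  have hrow : HasDerivAt (fun t => rowSum p t y)
      (∑ x, -(p (x, y) ^ ((1 : ℝ) / (1 + ρ)) * log (p (x, y)) / (1 + ρ) ^ 2)) ρ :=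
    HasDerivAt.fun_sum fun x _ => hasDerivAt_rpow_one_div_one_add (hp _) hρ
  have hpow : rowSum p ρ y ^ (1 + ρ)
      = ∑ x, rowSum p ρ y ^ ρ * p (x, y) ^ ((1 : ℝ) / (1 + ρ)) := by
    rw [← mul_sum, rpow_one_add' hS.le hρ.ne', mul_comm]
    rfl
  refine (hrow.rpow ((hasDerivAt_id ρ).const_add 1) hS).congr_deriv ?_
  simp only [id, add_sub_cancel_left, one_mul, hpow, sum_mul, ← sum_add_distrib]
  refine sum_congr rfl fun x _ => ?_
  rw [tiltScore]
  field_simp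
  ring

variable [Fintype 𝒴]

noncomputable def gallagerSum (p : 𝒳 × 𝒴 → ℝ) (t : ℝ) : ℝ :=
  ∑ y, rowSum p t y ^ (1 + t)

lemma gallagerE0_eq_log_div_log (t : ℝ) : gallagerE0 p t = log (gallagerSum p t) / log 2 := rfl

lemma gallagerSum_pos [Nonempty 𝒴] (hp : ∀ z, 0 ≤ p z) (hY : ∀ y, 0 < ∑ x, p (x, y))
    (t : ℝ) : 0 < gallagerSum p t :=
  sum_pos (fun y _ => rpow_pos_of_pos (rowSum_pos hp hY t y) _) univ_nonempty

lemma tilt_eq (hp : ∀ z, 0 ≤ p z) (hY : ∀ y, 0 < ∑ x, p (x, y)) (z : 𝒳 × 𝒴) :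
    tilt p ρ z = rowSum p ρ z.2 ^ ρ * p z ^ ((1 : ℝ) / (1 + ρ)) / gallagerSum p ρ := by
  have hS := (rowSum_pos hp hY ρ z.2).ne'
  change rowSum p ρ z.2 ^ (1 + ρ) / gallagerSum p ρ
    * (p z ^ ((1 : ℝ) / (1 + ρ)) / rowSum p ρ z.2) = _
  rw [add_comm, rpow_add_one hS]
  field_simp

lemma tilt_nonneg (hp : ∀ z, 0 ≤ p z) (hY : ∀ y, 0 < ∑ x, p (x, y)) (z : 𝒳 × 𝒴) :
    0 ≤ tilt p ρ z := by
  rw [tilt_eq hp hY]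
  have hS (y : 𝒴) := (rowSum_pos hp hY ρ y).le
  exact div_nonneg (mul_nonneg (rpow_nonneg (hS z.2) _) (rpow_nonneg (hp z) _))
    (sum_nonneg fun y _ => rpow_nonneg (hS y) _)

lemma tilt_eq_zero (hρ : 0 < 1 + ρ) {z : 𝒳 × 𝒴} (hz : p z = 0) : tilt p ρ z = 0 := by
  rw [tilt, hz, zero_rpow (by positivity), zero_div, mul_zero]

lemma sum_tilt [Nonempty 𝒴] (hp : ∀ z, 0 ≤ p z) (hY : ∀ y, 0 < ∑ x, p (x, y)) :
    ∑ z, tilt p ρ z = 1 := by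
  have hrow (y : 𝒴) : ∑ x, tilt p ρ (x, y) = rowSum p ρ y ^ (1 + ρ) / gallagerSum p ρ := by
    simp only [tilt_eq hp hY, ← sum_div, ← mul_sum]
    change rowSum p ρ y ^ ρ * rowSum p ρ y / _ = _
    rw [← rpow_add_one (rowSum_pos hp hY ρ y).ne', add_comm ρ 1]
  rw [Fintype.sum_prod_type_right, sum_congr rfl fun y _ => hrow y, ← sum_div]
  exact div_self (gallagerSum_pos hp hY ρ).ne'

lemma hasDerivAt_log_gallagerSum [Nonempty 𝒴] (hp : ∀ z, 0 ≤ p z)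
    (hY : ∀ y, 0 < ∑ x, p (x, y)) (hρ : 0 < 1 + ρ) :
    HasDerivAt (fun t => log (gallagerSum p t)) (∑ z, tilt p ρ z * tiltScore p ρ z) ρ := by
  have hsum := (HasDerivAt.fun_sum fun y _ => hasDerivAt_rowSum_rpow hp hY hρ y).log
    (gallagerSum_pos hp hY ρ).ne'
  refine hsum.congr_deriv ?_
  change _ / gallagerSum p ρ = _
  simp only [Fintype.sum_prod_type_right, tilt_eq hp hY, sum_div]
  refine sum_congr rfl fun y _ => sum_congr rfl fun x _ => ?_
  ring

lemma log_tilt_div [Nonempty 𝒴] (hp : ∀ z, 0 ≤ p z) (hY : ∀ y, 0 < ∑ x, p (x, y))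
    (hρ : 0 < 1 + ρ) {z : 𝒳 × 𝒴} (hz : p z ≠ 0) :
    log (tilt p ρ z / p z) = ρ * tiltScore p ρ z - log (gallagerSum p ρ) := by
  have hpz : 0 < p z := (hp z).lt_of_ne' hz
  have hS := rowSum_pos hp hY ρ z.2
  have hF := gallagerSum_pos hp hY ρ
  rw [tilt_eq hp hY, log_div (by positivity) hz, log_div (by positivity) hF.ne',
    log_mul (by positivity) (by positivity), log_rpow hS, log_rpow hpz, tiltScore]
  field_simp
  ring

lemma klDiv_tilt_mul_log_two [Nonempty 𝒴] (hp : ∀ z, 0 ≤ p z)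
    (hY : ∀ y, 0 < ∑ x, p (x, y)) (hρ : 0 < 1 + ρ) :
    klDiv (tilt p ρ) p * log 2
      = ρ * ∑ z, tilt p ρ z * tiltScore p ρ z - log (gallagerSum p ρ) := by
  have hterm (z : 𝒳 × 𝒴) : tilt p ρ z * log (tilt p ρ z / p z)
      = tilt p ρ z * (ρ * tiltScore p ρ z - log (gallagerSum p ρ)) := by
    by_cases hz : p z = 0
    · rw [tilt_eq_zero hρ hz, zero_mul, zero_mul]
    · rw [log_tilt_div hp hY hρ hz]
  simp only [klDiv_mul_log_two, hterm, mul_sub, sum_sub_distrib, ← sum_mul, sum_tilt hp hY,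
    one_mul, mul_sum]
  refine congrArg (· - _) (sum_congr rfl fun z _ => ?_)
  ring

lemma hasDerivAt_gallagerE0_div [Nonempty 𝒴] (hp : ∀ z, 0 ≤ p z)
    (hY : ∀ y, 0 < ∑ x, p (x, y)) (hρ : 0 < ρ) :
    HasDerivAt (fun t => gallagerE0 p t / t) (klDiv (tilt p ρ) p / ρ ^ 2) ρ := by
  have hE0 : HasDerivAt (gallagerE0 p) ((∑ z, tilt p ρ z * tiltScore p ρ z) / log 2) ρ :=
    (hasDerivAt_log_gallagerSum hp hY (by linarith)).div_const _
  refine (hE0.div (hasDerivAt_id ρ) hρ.ne').congr_deriv ?_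
  have hkl : klDiv (tilt p ρ) p
      = (ρ * ∑ z, tilt p ρ z * tiltScore p ρ z - log (gallagerSum p ρ)) / log 2 := by
    rw [eq_div_iff (log_pos one_lt_two).ne', klDiv_tilt_mul_log_two hp hY (by linarith)]
  rw [hkl, gallagerE0_eq_log_div_log, id]
  ring

lemma rpow_mul_gallagerSum_of_tilt_eq_self [Nonempty 𝒴] (hp : ∀ z, 0 ≤ p z)
    (hY : ∀ y, 0 < ∑ x, p (x, y)) (hρ : 0 < 1 + ρ) (h : tilt p ρ = p) {z : 𝒳 × 𝒴}
    (hz : p z ≠ 0) : p z ^ (ρ / (1 + ρ)) * gallagerSum p ρ = rowSum p ρ z.2 ^ ρ := by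
  have hpz : 0 < p z := (hp z).lt_of_ne' hz
  have hsplit : p z ^ ((1 : ℝ) / (1 + ρ)) * p z ^ (ρ / (1 + ρ)) = p z := by
    rw [← rpow_add hpz, ← add_div, div_self hρ.ne', rpow_one]
  have htilt := congrFun h z
  rw [tilt_eq hp hY, div_eq_iff (gallagerSum_pos hp hY ρ).ne'] at htilt
  refine mul_left_cancel₀ (rpow_pos_of_pos hpz ((1 : ℝ) / (1 + ρ))).ne' ?_
  linear_combination gallagerSum p ρ * hsplit - htilt

lemma eq_of_tilt_eq_self_of_ne_zero [Nonempty 𝒴] (hp : ∀ z, 0 ≤ p z)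
    (hY : ∀ y, 0 < ∑ x, p (x, y)) (hρ : 0 < ρ) (h : tilt p ρ = p) {x x' : 𝒳} {y : 𝒴}
    (hx : p (x, y) ≠ 0) (hx' : p (x', y) ≠ 0) : p (x, y) = p (x', y) := by
  have h1ρ : 0 < 1 + ρ := by linarith
  have hpow := (rpow_mul_gallagerSum_of_tilt_eq_self hp hY h1ρ h hx).trans
    (rpow_mul_gallagerSum_of_tilt_eq_self hp hY h1ρ h hx').symm
  exact (rpow_left_inj (hp _) (hp _) (by positivity)).1
    (mul_right_cancel₀ (gallagerSum_pos hp hY ρ).ne' hpow)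

lemma card_rpow_eq_gallagerSum_of_tilt_eq_self [Nonempty 𝒴] (hp : ∀ z, 0 ≤ p z)
    (hY : ∀ y, 0 < ∑ x, p (x, y)) (hρ : 0 < ρ) (h : tilt p ρ = p) (y : 𝒴) :
    (#{x | p (x, y) ≠ 0} : ℝ) ^ ρ = gallagerSum p ρ := by
  have h1ρ : 0 < 1 + ρ := by linarith
  obtain ⟨x₀, -, hx₀⟩ := exists_ne_zero_of_sum_ne_zero (hY y).ne'
  have hc : 0 < p (x₀, y) := (hp _).lt_of_ne' hx₀
  have hrow : rowSum p ρ y = #{x | p (x, y) ≠ 0} * p (x₀, y) ^ ((1 : ℝ) / (1 + ρ)) :=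
    sum_comp_eq_card_support_mul (g := (· ^ ((1 : ℝ) / (1 + ρ))))
      (fun x hx => eq_of_tilt_eq_self_of_ne_zero hp hY hρ h hx hx₀)
      (zero_rpow (one_div_pos.2 h1ρ).ne')
  have hpow := rpow_mul_gallagerSum_of_tilt_eq_self hp hY h1ρ h hx₀
  rw [hrow, mul_rpow (Nat.cast_nonneg _) (rpow_nonneg hc.le _), ← rpow_mul hc.le,
    one_div_mul_eq_div] at hpow
  exact (mul_left_cancel₀ (rpow_pos_of_pos hc _).ne' (hpow.trans (mul_comm _ _))).symm

lemma condUniform_of_tilt_eq_self [Nonempty 𝒴] (hp : ∀ z, 0 ≤ p z)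
    (hY : ∀ y, 0 < ∑ x, p (x, y)) (hρ : 0 < ρ) (h : tilt p ρ = p) : CondUniform p := by
  obtain ⟨y₀⟩ := ‹Nonempty 𝒴›
  refine ⟨#{x | p (x, y₀) ≠ 0}, ?_⟩
  rintro ⟨x, y⟩ hz
  have hcard : (#{x | p (x, y) ≠ 0} : ℝ) = #{x | p (x, y₀) ≠ 0} :=
    (rpow_left_inj (Nat.cast_nonneg _) (Nat.cast_nonneg _) hρ.ne').1
      ((card_rpow_eq_gallagerSum_of_tilt_eq_self hp hY hρ h y).trans
        (card_rpow_eq_gallagerSum_of_tilt_eq_self hp hY hρ h y₀).symm)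
  have hsum : ∑ x', p (x', y) = #{x | p (x, y) ≠ 0} * p (x, y) :=
    sum_comp_eq_card_support_mul (g := fun t => t)
      (fun x' hx' => eq_of_tilt_eq_self_of_ne_zero hp hY hρ h hx' hz) rfl
  rw [hsum, hcard, div_mul_cancel_right₀ hz, one_div]

end GallagerE0

open GallagerE0 in
/-- `E₀(ρ)/ρ` is nondecreasing on `(0,∞)`; its derivative equals
`D(p̄^ρ_{XY}‖p_{XY})/ρ²`, which is strictly positive unless `p_{X|Y}` is conditionally
uniform on its support. -/
theorem E0_over_rho_monotone {𝒳 𝒴 : Type*} [Fintype 𝒳] [Fintype 𝒴]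
    (p : 𝒳 × 𝒴 → ℝ) (hp : ∀ z, 0 ≤ p z) (hpsum : ∑ z, p z = 1)
    (hY : ∀ y, 0 < ∑ x, p (x, y)) :
    MonotoneOn (fun ρ => gallagerE0 p ρ / ρ) (Set.Ioi (0 : ℝ)) ∧
    (∀ ρ : ℝ, 0 < ρ →
      HasDerivAt (fun t => gallagerE0 p t / t) (klDiv (tilt p ρ) p / ρ ^ 2) ρ) ∧
    (¬ CondUniform p → ∀ ρ : ℝ, 0 < ρ → 0 < klDiv (tilt p ρ) p / ρ ^ 2) := by
  obtain ⟨z₀, -, -⟩ := exists_ne_zero_of_sum_ne_zero (hpsum.trans_ne one_ne_zero)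
  have : Nonempty 𝒴 := ⟨z₀.2⟩
  have hderiv (ρ : ℝ) (hρ : 0 < ρ) := hasDerivAt_gallagerE0_div hp hY hρ
  have hkl_nonneg (ρ : ℝ) (hρ : 0 < ρ) : 0 ≤ klDiv (tilt p ρ) p :=
    klDiv_nonneg (tilt_nonneg hp hY) hp (fun _ => tilt_eq_zero (by linarith)) (sum_tilt hp hY)
      hpsum
  refine ⟨?_, hderiv, fun hcu ρ hρ => div_pos ?_ (pow_pos hρ 2)⟩
  · refine monotoneOn_of_hasDerivWithinAt_nonneg (f' := fun ρ => klDiv (tilt p ρ) p / ρ ^ 2)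
      (convex_Ioi 0) (fun ρ hρ => (hderiv ρ hρ).continuousAt.continuousWithinAt) ?_ ?_ <;>
      rw [interior_Ioi]
    · exact fun ρ hρ => (hderiv ρ hρ).hasDerivWithinAt
    · exact fun ρ hρ => div_nonneg (hkl_nonneg ρ hρ) (sq_nonneg ρ)
  · exact klDiv_pos (tilt_nonneg hp hY) hp (fun _ => tilt_eq_zero (by linarith)) (sum_tilt hp hY)
      hpsum fun h => hcu (condUniform_of_tilt_eq_self hp hY hρ h)
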